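/- The set of natural numbers N whose Zeckendorf expansion ends in the digit d_0 = 1 is exactly {A(A(n)) : n ≥ 1} = {⌊nφ⌋ + n − 1 : n ≥ 1}, where A(n) = ⌊nφ⌋; equivalently A∘A = B − 1 where B(n) = ⌊nφ²⌋. -/

import Mathlib

noncomputable def phi : ℝ := (1 + Real.sqrt 5) / 2

/-- Lower Wythoff sequence. -/
noncomputable def A (n : ℕ) : ℕ := (⌊(n : ℝ) * phi⌋).toNat

/-- Upper Wythoff sequence. -/
noncomputable def B (n : ℕ) : ℕ := (⌊(n : ℝ) * phi ^ 2⌋).toNat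

/-- `d` is the digit sequence of the Zeckendorf expansion of `N`:
digits are 0/1, no two consecutive 1's, finitely many nonzero digits,
and `N = Σ dᵢ · F_{i+2}`. -/
def IsZeck (N : ℕ) (d : ℕ → ℕ) : Prop :=
  (∀ i, d i ≤ 1) ∧ (∀ i, ¬(d i = 1 ∧ d (i + 1) = 1)) ∧
  (Function.support d).Finite ∧ N = ∑ᶠ i, d i * Nat.fib (i + 2)

/-!
With `F_{i+2} - φ² F_i = ψ^i`, a Zeckendorf expansion `N = Σ dᵢ F_{i+2}` gives the integer
`n = 1 + Σ dᵢ F_i` with `n φ² = N + 1 + φ - Σ dᵢ ψ^i`. Since `ψ < 0` and the digits are `0/1`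
without two consecutive `1`s, the alternating sum `Σ dᵢ ψ^i` lies in `(-ψ, 1 - ψ)` when `d₀ = 1`
and in `(-1, -ψ)` when `d₀ = 0`. So `n φ² - (N + 1)` lies in `(0, 1)`, i.e. `B n = N + 1`, exactly
when `d₀ = 1`. Finally `A (A n) + 1 = A n + n = B n`, because `φ² = φ + 1` and `1 / φ = φ - 1`.
-/

open Real Finset
open scoped goldenRatio

section GoldenConjDigitSums

variable (d : ℕ → ℝ)

theorem sum_range_succ_mul_goldenConj_pow (K : ℕ) :
    ∑ i ∈ range (K + 1), d i * ψ ^ i = d 0 + ψ * ∑ i ∈ range K, d (i + 1) * ψ ^ i := by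
  rw [sum_range_succ', mul_sum, add_comm, pow_zero, mul_one]
  exact congrArg _ (sum_congr rfl fun i _ => by ring)

variable {d}

theorem sum_mul_goldenConj_pow_mem_Ioo (h0 : ∀ i, 0 ≤ d i) (h1 : ∀ i, d i ≤ 1) (K : ℕ) :
    ∑ i ∈ range K, d i * ψ ^ i ∈ Set.Ioo (-1) φ := by
  induction K generalizing d with
  | zero => simpa using goldenRatio_pos
  | succ K ih =>
    obtain ⟨hlo, hhi⟩ := ih (fun i => h0 (i + 1)) (fun i => h1 (i + 1))
    rw [sum_range_succ_mul_goldenConj_pow]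
    have hψ := goldenConj_neg
    have hφψ := goldenRatio_mul_goldenConj
    constructor <;> nlinarith [h0 0, h1 0, goldenRatio_add_goldenConj]

theorem sum_mul_goldenConj_pow_mem_Ioo_of_head_eq_zero (h0 : ∀ i, 0 ≤ d i) (h1 : ∀ i, d i ≤ 1)
    (hd0 : d 0 = 0) (K : ℕ) : ∑ i ∈ range K, d i * ψ ^ i ∈ Set.Ioo (-1) (-ψ) := by
  have hψ := goldenConj_neg
  cases K with
  | zero => simpa using hψ
  | succ K =>
    obtain ⟨hlo, hhi⟩ := sum_mul_goldenConj_pow_mem_Ioo (fun i => h0 (i + 1)) (fun i => h1 (i + 1)) K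
    rw [sum_range_succ_mul_goldenConj_pow, hd0, zero_add]
    have hφψ := goldenRatio_mul_goldenConj
    constructor <;> nlinarith

theorem sum_mul_goldenConj_pow_mem_Ioo_of_head_eq_one (h0 : ∀ i, 0 ≤ d i) (h1 : ∀ i, d i ≤ 1)
    (hd0 : d 0 = 1) (hd1 : d 1 = 0) (K : ℕ) :
    ∑ i ∈ range (K + 1), d i * ψ ^ i ∈ Set.Ioo (-ψ) (1 - ψ) := by
  obtain ⟨hlo, hhi⟩ := sum_mul_goldenConj_pow_mem_Ioo_of_head_eq_zero
    (fun i => h0 (i + 1)) (fun i => h1 (i + 1)) hd1 K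
  rw [sum_range_succ_mul_goldenConj_pow, hd0]
  have hψ := goldenConj_neg
  constructor <;> nlinarith [goldenConj_sq]

theorem fib_add_two_sub_goldenRatio_sq_mul_fib (i : ℕ) :
    (Nat.fib (i + 2) : ℝ) - φ ^ 2 * Nat.fib i = ψ ^ i := by
  linear_combination fib_succ_sub_goldenRatio_mul_fib (i + 1) +
    φ * fib_succ_sub_goldenRatio_mul_fib i - ψ ^ i * goldenRatio_add_goldenConj

variable (d)

theorem one_add_sum_mul_fib_mul_goldenRatio_sq (K : ℕ) :
    (1 + ∑ i ∈ range K, d i * Nat.fib i) * φ ^ 2 =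
      ∑ i ∈ range K, d i * Nat.fib (i + 2) + 1 + φ - ∑ i ∈ range K, d i * ψ ^ i := by
  have hterm (i : ℕ) : d i * Nat.fib i * φ ^ 2 = d i * Nat.fib (i + 2) - d i * ψ ^ i := by
    linear_combination (-d i) * fib_add_two_sub_goldenRatio_sq_mul_fib i
  rw [add_mul, sum_mul, sum_congr rfl fun i _ => hterm i, sum_sub_distrib, goldenRatio_sq]
  ring

end GoldenConjDigitSums

theorem A_eq_floor (n : ℕ) : A n = ⌊(n : ℝ) * φ⌋₊ := Int.floor_toNat _

theorem B_eq_floor (n : ℕ) : B n = ⌊(n : ℝ) * φ ^ 2⌋₊ := Int.floor_toNat _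

theorem B_eq_iff {n k : ℕ} : B n = k ↔ (k : ℝ) ≤ n * φ ^ 2 ∧ n * φ ^ 2 < k + 1 := by
  rw [B_eq_floor, Nat.floor_eq_iff (by positivity)]

theorem B_eq_A_add (n : ℕ) : B n = A n + n := by
  rw [B_eq_floor, A_eq_floor, goldenRatio_sq, mul_add, mul_one,
    Nat.floor_add_natCast (by positivity)]

theorem natCast_A_lt {n : ℕ} (hn : n ≠ 0) : (A n : ℝ) < n * φ := by
  rw [A_eq_floor]
  exact (Nat.floor_le (by positivity)).lt_of_ne ((goldenRatio_irrational.natCast_mul hn).ne_nat _).symm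

theorem lt_natCast_A_add_one (n : ℕ) : n * φ < A n + 1 :=
  A_eq_floor n ▸ Nat.lt_floor_add_one _

theorem A_A_add_one {n : ℕ} (hn : n ≠ 0) : A (A n) + 1 = B n := by
  obtain ⟨m, rfl⟩ := Nat.exists_eq_add_one_of_ne_zero hn
  have hlo := natCast_A_lt hn
  have hhi := lt_natCast_A_add_one (m + 1)
  have hφ : 0 < φ - 1 := sub_pos.2 one_lt_goldenRatio
  -- With `a = A (m + 1)`: `a < (m + 1) φ < a + 1`, and `a φ = a + a (φ - 1)` where `(φ - 1) φ = 1`.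
  have hA : A (A (m + 1)) = A (m + 1) + m := by
    rw [A_eq_floor (A (m + 1)), Nat.floor_eq_iff (by positivity)]
    push_cast at hlo hhi ⊢
    constructor <;> nlinarith [mul_lt_mul_of_pos_right hlo hφ, mul_lt_mul_of_pos_right hhi hφ,
      goldenRatio_sq, goldenRatio_lt_two]
  rw [hA, B_eq_A_add, add_assoc]

theorem List.IsZeckendorfRep.pairwise {l : List ℕ} (hl : l.IsZeckendorfRep) :
    (l ++ [0]).Pairwise (fun a b => b + 2 ≤ a) :=
  (@List.isChain_iff_pairwise _ _ _ ⟨fun hab hbc => by omega⟩).1 hl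

theorem exists_isZeck (N : ℕ) : ∃ d, IsZeck N d := by
  classical
  set l := N.zeckendorf
  obtain ⟨hl, -, hl0⟩ := List.pairwise_append.1 (Nat.isZeckendorfRep_zeckendorf N).pairwise
  have two_le (a : ℕ) (ha : a ∈ l) : 2 ≤ a := hl0 a ha 0 (List.mem_singleton_self 0)
  have hsep : ∀ a ∈ l, ∀ b ∈ l, a ≠ b → b + 2 ≤ a ∨ a + 2 ≤ b :=
    @List.Pairwise.forall _ _ _ ⟨fun _ _ => Or.symm⟩ (hl.imp Or.inl)
  have hnodup : l.Nodup := hl.imp fun h => by omega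
  refine ⟨fun i => if i + 2 ∈ l then 1 else 0, fun i => ite_le_one le_rfl zero_le_one, ?_, ?_, ?_⟩
  · rintro i ⟨h1, h2⟩
    simp only [ite_eq_left_iff, zero_ne_one, imp_false, not_not] at h1 h2
    have := hsep _ h1 _ h2 (by omega)
    omega
  · refine (l.finite_toSet.preimage (add_left_injective 2).injOn).subset fun i hi => ?_
    simpa using hi
  · have hsupp : Function.support (fun i => (if i + 2 ∈ l then 1 else 0) * Nat.fib (i + 2)) ⊆
        l.toFinset.image (· - 2) := by
      intro i hi
      simp only [Function.mem_support, ne_eq, mul_eq_zero, ite_eq_right_iff, one_ne_zero,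
        imp_false, not_or, not_not] at hi
      simp only [coe_image, List.coe_toFinset, Set.mem_image]
      exact ⟨i + 2, hi.1, rfl⟩
    have hinj : Set.InjOn (· - 2) (l.toFinset : Set ℕ) := fun a ha b hb hab => by
      have := two_le a (by simpa using ha); have := two_le b (by simpa using hb)
      simp only at hab; omega
    conv_lhs => rw [← Nat.sum_zeckendorf_fib N]
    rw [finsum_eq_sum_of_support_subset _ hsupp, sum_image hinj, List.sum_toFinset _ hnodup]
    exact congrArg List.sum (List.map_congr_left fun a ha => by
      rw [Nat.sub_add_cancel (two_le a ha), if_pos ha, one_mul])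

namespace IsZeck

variable {N : ℕ} {d : ℕ → ℕ}

theorem eventually_eq_sum_range (h : IsZeck N d) :
    ∀ᶠ K in Filter.atTop, N = ∑ i ∈ range K, d i * Nat.fib (i + 2) := by
  obtain ⟨K₀, hK₀⟩ := h.2.2.1.toFinset.exists_nat_subset_range
  refine Filter.eventually_atTop.2 ⟨K₀, fun K hK => ?_⟩
  rw [h.2.2.2, finsum_eq_sum_of_support_subset]
  exact (Function.support_mul_subset_left _ _).trans fun i hi =>
    range_subset_range.2 hK (hK₀ (h.2.2.1.mem_toFinset.2 hi))

theorem exists_natCast_mul_goldenRatio_sq (h : IsZeck N d) :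
    ∃ n K : ℕ, (n : ℝ) * φ ^ 2 = N + 1 + φ - ∑ i ∈ range (K + 1), (d i : ℝ) * ψ ^ i := by
  obtain ⟨K, hK⟩ := Filter.eventually_atTop.1 h.eventually_eq_sum_range
  refine ⟨1 + ∑ i ∈ range (K + 1), d i * Nat.fib i, K, ?_⟩
  rw [hK (K + 1) K.le_succ]
  push_cast
  exact one_add_sum_mul_fib_mul_goldenRatio_sq (fun i => (d i : ℝ)) (K + 1)

theorem exists_B_eq_add_one (h : IsZeck N d) (h0 : d 0 = 1) : ∃ n, B n = N + 1 := by
  obtain ⟨n, K, hn⟩ := h.exists_natCast_mul_goldenRatio_sq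
  have h1 : d 1 = 0 := by
    have h01 : ¬d 1 = 1 := fun h1 => h.2.1 0 ⟨h0, h1⟩
    have := h.1 1
    omega
  obtain ⟨hlo, hhi⟩ := sum_mul_goldenConj_pow_mem_Ioo_of_head_eq_one (d := fun i => (d i : ℝ))
    (fun i => Nat.cast_nonneg _) (fun i => by exact_mod_cast h.1 i) (by simp [h0]) (by simp [h1]) K
  refine ⟨n, B_eq_iff.2 ⟨?_, ?_⟩⟩ <;> push_cast <;> linarith [goldenRatio_add_goldenConj]

theorem head_eq_one_of_B_eq_add_one (h : IsZeck N d) {m : ℕ} (hm : B m = N + 1) : d 0 = 1 := by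
  obtain ⟨n, K, hn⟩ := h.exists_natCast_mul_goldenRatio_sq
  by_contra h0
  obtain ⟨hlo, hhi⟩ := sum_mul_goldenConj_pow_mem_Ioo_of_head_eq_zero (d := fun i => (d i : ℝ))
    (fun i => Nat.cast_nonneg _) (fun i => by exact_mod_cast h.1 i)
    (by have := h.1 0; simp only [Nat.cast_eq_zero]; omega) (K + 1)
  obtain ⟨hmlo, hmhi⟩ := B_eq_iff.1 hm
  push_cast at hmlo hmhi
  have hsq : 0 ≤ φ ^ 2 := sq_nonneg φ
  -- Now `n φ² - (N + 1)` lies in `(1, φ²)`, so no multiple of `φ²` lies in `[N + 1, N + 2)`.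
  rcases lt_or_ge m n with hmn | hmn
  · have : ((m + 1 : ℕ) : ℝ) ≤ n := by exact_mod_cast hmn
    push_cast at this
    nlinarith [mul_le_mul_of_nonneg_right this hsq, goldenRatio_sq]
  · have : (n : ℝ) ≤ m := by exact_mod_cast hmn
    nlinarith [mul_le_mul_of_nonneg_right this hsq, goldenRatio_sq, goldenRatio_add_goldenConj]

end IsZeck

/-- The numbers whose Zeckendorf expansion ends in digit d₀ = 1 are exactly the
numbers A(A(n)) = ⌊nphi⌋ + n − 1, n ≥ 1; equivalently A∘A = B − 1. -/
theorem zeck_ends_in_1 :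
    (∀ N : ℕ, (∃ d : ℕ → ℕ, IsZeck N d ∧ d 0 = 1) ↔ ∃ n : ℕ, 1 ≤ n ∧ N = A (A n)) ∧
      ∀ n : ℕ, 1 ≤ n → (A (A n) : ℤ) = (A n : ℤ) + n - 1 ∧ A (A n) = B n - 1 := by
  refine ⟨fun N => ⟨?_, ?_⟩, fun n hn => ?_⟩
  · rintro ⟨d, hd, h0⟩
    obtain ⟨n, hn⟩ := hd.exists_B_eq_add_one h0
    have hn0 : n ≠ 0 := by rintro rfl; simp [B_eq_floor] at hn
    exact ⟨n, Nat.one_le_iff_ne_zero.2 hn0, by have := A_A_add_one hn0; omega⟩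
  · rintro ⟨n, hn, rfl⟩
    obtain ⟨d, hd⟩ := exists_isZeck (A (A n))
    exact ⟨d, hd, hd.head_eq_one_of_B_eq_add_one (A_A_add_one (by omega)).symm⟩
  · have := A_A_add_one (n := n) (by omega)
    have := B_eq_A_add n
    omega
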